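/- arXiv:2006.10849 — 2 statements merged into one kernel-verified Lean document; each statement's English description precedes it below -/
import Mathlib

section
/- Let e_0, ..., e_{n-1} ∈ ℤ^n with e_i · e_j = -δ_{ij}. Suppose D'' = -2e_i - e_I (type b, i ∉ I) and D = e_j - e_J (type a, j ∉ J) satisfy D'' · D = 1. Then D'' + D is again of type b: there exist an index k and a subset K with k ∉ K such that D'' + D = -2e_k - e_K. -/
open Finset

/-- The standard negative definite intersection form on `ℤ^n`. -/
def inter {n : ℕ} (x y : Fin n → ℤ) : ℤ := -∑ k, x k * y k

/-- The Donaldson class `e i`. -/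
def E {n : ℕ} (i : Fin n) : Fin n → ℤ := Pi.single i 1

/-- `e_I = ∑_{i ∈ I} e_i`. -/
def ES {n : ℕ} (I : Finset (Fin n)) : Fin n → ℤ := ∑ i ∈ I, E i

lemma ES_apply {n : ℕ} (I : Finset (Fin n)) (x : Fin n) :
    ES I x = if x ∈ I then 1 else 0 := by
  classical
  simp [ES, E, Finset.sum_apply, Pi.single_apply, Finset.sum_ite_eq' I x (fun _ => (1:ℤ))]

lemma E_apply {n : ℕ} (i x : Fin n) : E i x = if x = i then 1 else 0 := by
  simp [E, Pi.single_apply]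

lemma sum_ind_ind {n : ℕ} (a b : Fin n) :
    ∑ k : Fin n, (if k = a then (1:ℤ) else 0) * (if k = b then 1 else 0)
      = if a = b then 1 else 0 := by
  simp only [ite_mul, one_mul, zero_mul]
  rw [Finset.sum_ite_eq' Finset.univ a]
  simp

lemma sum_ind_mem {n : ℕ} (a : Fin n) (S : Finset (Fin n)) :
    ∑ k : Fin n, (if k = a then (1:ℤ) else 0) * (if k ∈ S then 1 else 0)
      = if a ∈ S then 1 else 0 := by
  simp only [ite_mul, one_mul, zero_mul]
  rw [Finset.sum_ite_eq' Finset.univ a]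
  simp

lemma sum_mem_mem {n : ℕ} (S T : Finset (Fin n)) :
    ∑ k : Fin n, (if k ∈ S then (1:ℤ) else 0) * (if k ∈ T then 1 else 0)
      = ((S ∩ T).card : ℤ) := by
  have : ∀ k : Fin n, (if k ∈ S then (1:ℤ) else 0) * (if k ∈ T then 1 else 0)
      = if k ∈ S ∩ T then 1 else 0 := by
    intro k
    by_cases h3 : k ∈ S <;> by_cases h4 : k ∈ T <;> simp [h3, h4]
  rw [Finset.sum_congr rfl (fun k _ => this k), Finset.sum_ite_mem]
  simp

lemma inter_val {n : ℕ} (i j : Fin n) (I J : Finset (Fin n)) :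
    inter ((-2 : ℤ) • E i - ES I) (E j - ES J) =
      2 * (if i = j then 1 else 0) - 2 * (if i ∈ J then 1 else 0)
        + (if j ∈ I then 1 else 0) - ((I ∩ J).card : ℤ) := by
  classical
  have hterm : ∀ k : Fin n,
      (((-2 : ℤ) • E i - ES I) k * (E j - ES J) k) =
        (-2) * ((if k = i then (1:ℤ) else 0) * (if k = j then 1 else 0))
        + 2 * ((if k = i then (1:ℤ) else 0) * (if k ∈ J then 1 else 0))
        - ((if k = j then (1:ℤ) else 0) * (if k ∈ I then 1 else 0))
        + (if k ∈ I then (1:ℤ) else 0) * (if k ∈ J then 1 else 0) := by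
    intro k
    simp only [Pi.sub_apply, Pi.smul_apply, E_apply, ES_apply, smul_eq_mul]
    split_ifs <;> ring
  unfold inter
  rw [Finset.sum_congr rfl (fun k _ => hterm k)]
  rw [Finset.sum_add_distrib, Finset.sum_sub_distrib, Finset.sum_add_distrib,
    ← Finset.mul_sum, ← Finset.mul_sum, sum_ind_ind, sum_ind_mem, sum_ind_mem,
    sum_mem_mem]
  ring

theorem stmt4 {n : ℕ} (i j : Fin n) (I J : Finset (Fin n)) (hi : i ∉ I) (hj : j ∉ J)
    (h : inter ((-2 : ℤ) • E i - ES I) (E j - ES J) = 1) :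
    ∃ (k : Fin n) (K : Finset (Fin n)), k ∉ K ∧
      ((-2 : ℤ) • E i - ES I) + (E j - ES J) = (-2 : ℤ) • E k - ES K := by
  classical
  rw [inter_val] at h
  by_cases hij : i = j
  · -- diagonal case: |I ∩ J| = 1
    subst hij
    rw [if_pos rfl, if_neg hj, if_neg hi] at h
    have hcard : (I ∩ J).card = 1 := by omega
    obtain ⟨m, hm⟩ := Finset.card_eq_one.mp hcard
    have hmI : m ∈ I := (Finset.mem_inter.mp (hm ▸ Finset.mem_singleton_self m)).1
    have hmJ : m ∈ J := (Finset.mem_inter.mp (hm ▸ Finset.mem_singleton_self m)).2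
    have him : i ≠ m := fun e => hi (e ▸ hmI)
    have hIJm : ∀ y : Fin n, y ∈ I → y ∈ J → y = m := by
      intro y h1 h2
      have : y ∈ I ∩ J := Finset.mem_inter.mpr ⟨h1, h2⟩
      rwa [hm, Finset.mem_singleton] at this
    refine ⟨m, insert i ((I ∪ J).erase m), by simp [him.symm], ?_⟩
    funext x
    simp only [Pi.add_apply, Pi.sub_apply, Pi.smul_apply, smul_eq_mul, E_apply,
      ES_apply, Finset.mem_insert, Finset.mem_erase, Finset.mem_union]
    by_cases hxi : x = i <;> by_cases hx1 : x ∈ I <;> by_cases hx2 : x ∈ J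
    · exact absurd (hxi ▸ hx1) hi
    · exact absurd (hxi ▸ hx1) hi
    · exact absurd (hxi ▸ hx2) hj
    · simp [hxi, hx1, hx2, him, him.symm, hi, hj]
    · have hxm : x = m := hIJm x hx1 hx2
      simp [hxi, hx1, hx2, hxm, him, him.symm, hi, hj, hmI, hmJ]
    · have hxm : x ≠ m := fun e => hx2 (e ▸ hmJ)
      simp [hxi, hx1, hx2, hxm, him, him.symm, hi, hj, hmI, hmJ]
    · have hxm : x ≠ m := fun e => hx1 (e ▸ hmI)
      simp [hxi, hx1, hx2, hxm, him, him.symm, hi, hj, hmI, hmJ]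
    · have hxm : x ≠ m := fun e => hx1 (e ▸ hmI)
      simp [hxi, hx1, hx2, hxm, him, him.symm, hi, hj, hmI, hmJ]
  · -- off-diagonal: j ∈ I, i ∉ J, I ∩ J = ∅
    rw [if_neg hij] at h
    have hC : j ∈ I := by
      by_contra hc
      rw [if_neg hc] at h
      by_cases hb : i ∈ J
      · rw [if_pos hb] at h; omega
      · rw [if_neg hb] at h; omega
    have hB : i ∉ J := by
      by_contra hb
      rw [if_pos hb, if_pos hC] at h; omega
    rw [if_neg hB, if_pos hC] at h
    have hdis : I ∩ J = ∅ := Finset.card_eq_zero.mp (by omega)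
    have hIJ : ∀ y : Fin n, y ∈ I → y ∈ J → False := by
      intro y h1 h2
      have : y ∈ I ∩ J := Finset.mem_inter.mpr ⟨h1, h2⟩
      simp [hdis] at this
    refine ⟨i, (I.erase j) ∪ J, by simp [hi, hB], ?_⟩
    funext x
    simp only [Pi.add_apply, Pi.sub_apply, Pi.smul_apply, smul_eq_mul, E_apply,
      ES_apply, Finset.mem_union, Finset.mem_erase]
    by_cases hxi : x = i <;> by_cases hxj : x = j <;> by_cases hx1 : x ∈ I <;>
        by_cases hx2 : x ∈ J
    · exact absurd (hxi ▸ hx1) hi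
    · exact absurd (hxi ▸ hx1) hi
    · exact absurd (hxi ▸ hx2) hB
    · exact absurd (hxj ▸ hxi.symm) hij  -- x = i and x = j contradict i ≠ j
    · exact absurd (hxi ▸ hx2) hB
    · exact absurd (hxi ▸ hx1) hi
    · exact absurd (hxi ▸ hx2) hB
    · simp [hxi, hxj, hx1, hx2, hi, hj, hij, Ne.symm hij, hC, hB]
    · exact absurd (hxj ▸ hx2) hj
    · simp [hxi, hxj, hx1, hx2, hi, hj, hij, Ne.symm hij, hC, hB]
    · exact absurd (hxj ▸ hx2) hj
    · exact absurd (hxj ▸ hC) hx1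
    · exact hIJ x hx1 hx2 |>.elim
    · simp [hxi, hxj, hx1, hx2, hi, hj, hij, Ne.symm hij, hC, hB]
    · simp [hxi, hxj, hx1, hx2, hi, hj, hij, Ne.symm hij, hC, hB]
    · simp [hxi, hxj, hx1, hx2, hi, hj, hij, Ne.symm hij, hC, hB]
end

section
/- Let e_0, ..., e_{n-1} ∈ ℤ^n with e_i · e_j = -δ_{ij}. Suppose D'' = e_i - e_I and D = e_j - e_J are both of type a (i ∉ I, j ∉ J, i ≠ j) and D'' · D = 1. Then D'' + D is either of type a (of the form e_k - e_K with k ∉ K) or of type b (of the form -2e_k - e_K with k ∉ K). -/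
open Finset

lemma ES_union {n : ℕ} {I K : Finset (Fin n)} (h : Disjoint I K) :
    ES (I ∪ K) = ES I + ES K := Finset.sum_union h

lemma ES_erase {n : ℕ} {J : Finset (Fin n)} {i : Fin n} (h : i ∈ J) :
    ES J = E i + ES (J.erase i) := (Finset.add_sum_erase _ _ h).symm

lemma inter_formula {n : ℕ} (i j : Fin n) (I J : Finset (Fin n)) (hij : i ≠ j) :
    inter (E i - ES I) (E j - ES J)
      = (if i ∈ J then 1 else 0) + (if j ∈ I then 1 else 0) - ((I ∩ J).card : ℤ) := by
  have h1 : ∑ k, E i k * E j k = 0 := by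
    simp [E, Pi.single_apply, ite_mul, Finset.sum_ite_eq, hij.symm]
  have h2 : ∑ k, E i k * ES J k = if i ∈ J then 1 else 0 := by
    simp [E, Pi.single_apply, ite_mul, Finset.sum_ite_eq, ES_apply]
  have h3 : ∑ k, ES I k * E j k = if j ∈ I then 1 else 0 := by
    simp [E, Pi.single_apply, mul_ite, Finset.sum_ite_eq', ES_apply]
  have h4 : ∑ k, ES I k * ES J k = ((I ∩ J).card : ℤ) := by
    simp only [ES_apply, ite_mul, one_mul, zero_mul, ← ite_and, ← Finset.mem_inter]
    rw [Finset.sum_ite_mem, Finset.univ_inter, Finset.sum_const, nsmul_eq_mul, mul_one]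
  simp only [inter, Pi.sub_apply, sub_mul, mul_sub, Finset.sum_sub_distrib, h1, h2, h3, h4]
  ring

theorem stmt5 {n : ℕ} (i j : Fin n) (I J : Finset (Fin n)) (hi : i ∉ I) (hj : j ∉ J)
    (hij : i ≠ j) (h : inter (E i - ES I) (E j - ES J) = 1) :
    (∃ (k : Fin n) (K : Finset (Fin n)), k ∉ K ∧
      (E i - ES I) + (E j - ES J) = E k - ES K) ∨
    (∃ (k : Fin n) (K : Finset (Fin n)), k ∉ K ∧
      (E i - ES I) + (E j - ES J) = (-2 : ℤ) • E k - ES K) := by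
  rw [inter_formula i j I J hij] at h
  by_cases hiJ : i ∈ J <;> by_cases hjI : j ∈ I <;> simp [hiJ, hjI] at h
  · -- i ∈ J, j ∈ I, card (I∩J) = 1
    have hcard : (I ∩ J).card = 1 := by omega
    obtain ⟨m, hm⟩ := Finset.card_eq_one.mp hcard
    have hmI : m ∈ I := by have := hm ▸ Finset.mem_singleton_self m; exact (Finset.mem_inter.mp this).1
    have hmJ : m ∈ J := by have := hm ▸ Finset.mem_singleton_self m; exact (Finset.mem_inter.mp this).2
    have hmi : m ≠ i := fun e => hi (e ▸ hmI)
    have hmj : m ≠ j := fun e => hj (e ▸ hmJ)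
    refine Or.inr ⟨m, ((I.erase j).erase m) ∪ ((J.erase i).erase m), ?_, ?_⟩
    · simp
    · have hdisj : Disjoint ((I.erase j).erase m) ((J.erase i).erase m) := by
        rw [Finset.disjoint_left]
        intro a haI haJ
        have haI' := Finset.mem_of_mem_erase (Finset.mem_of_mem_erase haI)
        have haJ' := Finset.mem_of_mem_erase (Finset.mem_of_mem_erase haJ)
        have : a ∈ I ∩ J := Finset.mem_inter.mpr ⟨haI', haJ'⟩
        rw [hm, Finset.mem_singleton] at this
        exact (Finset.ne_of_mem_erase haI) this
      rw [ES_union hdisj, ES_erase hjI, ES_erase hiJ,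
        ES_erase (Finset.mem_erase.mpr ⟨hmj, hmI⟩), ES_erase (Finset.mem_erase.mpr ⟨hmi, hmJ⟩)]
      module
  · -- i ∈ J, j ∉ I, I ∩ J = ∅
    have hcard : I ∩ J = ∅ := h
    refine Or.inl ⟨j, I ∪ J.erase i, ?_, ?_⟩
    · simp [hjI, hj, Finset.mem_erase]
    · have hdisj : Disjoint I (J.erase i) := by
        rw [Finset.disjoint_left]
        intro a haI haJ
        have : a ∈ I ∩ J := Finset.mem_inter.mpr ⟨haI, Finset.mem_of_mem_erase haJ⟩
        simp [hcard] at this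
      rw [ES_union hdisj, ES_erase hiJ]
      module
  · -- i ∉ J, j ∈ I
    have hcard : I ∩ J = ∅ := h
    refine Or.inl ⟨i, (I.erase j) ∪ J, ?_, ?_⟩
    · simp [hiJ, hi, Finset.mem_erase]
    · have hdisj : Disjoint (I.erase j) J := by
        rw [Finset.disjoint_left]
        intro a haI haJ
        have : a ∈ I ∩ J := Finset.mem_inter.mpr ⟨Finset.mem_of_mem_erase haI, haJ⟩
        simp [hcard] at this
      rw [ES_union hdisj, ES_erase hjI]
      module
  · -- both false: contradiction
    exfalso; omega
end
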